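/- arXiv:2407.19312 — 2 statements merged into one kernel-verified Lean document; each statement's English description precedes it below -/
import Mathlib

section
/- Let s > 0 and 0 < β ≤ min{s/2, 1}. Let A ∈ M_{s,β} and B ∈ M_{s,β}^+. Then for all i, j the series ∑_{k≥1} A_i^k B_k^j and ∑_{k≥1} B_i^k A_k^j converge absolutely in operator norm, the products AB and BA belong to M_{s,β}, and |AB|_{s,β} ≤ (2^{s/2+2}/β)·|A|_{s,β}·|B|_{s,β+} and |BA|_{s,β} ≤ (2^{s/2+2}/β)·|A|_{s,β}·|B|_{s,β+}. -/
/-!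
Write `ν(i,j) = (i∧j)^β w(i,j)^s` and `W(i,j) = √(i∧j) + |i-j| = √(i∧j) w(i,j)`, so that
`ν = W^(2β) w^(s-2β)`. The weight `w` is submultiplicative, and `W` satisfies
`W(i,j) (2 + |k-j|) ≤ 2 W(i,k) W(k,j)` whenever `|k-j| ≤ |i-k|`. Hence
`ν(i,j) / (ν(i,k) ν(k,j) (1 + |k-j|)) ≤ φ(|k-i|) + φ(|k-j|)` with
`φ(x) = (2/(2+x))^(2β) / (1+x)`, and `∑_{n≥1} φ(n) ≤ 3/(4β)` by comparison with the telescoping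
series of `(n+1)^(-2β)`. Summing over `k` bounds `ν(i,j) ∑_k ‖A_i^k‖ ‖B_k^j‖` by
`(2 + 3/β) |A|_{s,β} |B|_{s,β+}`, and `2 + 3/β ≤ 2^(s/2+2)/β`. The product `BA` gives the same
sum with `i` and `j` exchanged.
-/

/-- The weight `w(i,j) = (√(i∧j) + |i−j|)/√(i∧j)` for positive integers `i, j`. -/
noncomputable def w (i j : ℕ+) : ℝ :=
  (Real.sqrt (min (i : ℝ) (j : ℝ)) + |(i : ℝ) - (j : ℝ)|) / Real.sqrt (min (i : ℝ) (j : ℝ))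

/-- The dimension `2·d_j` of the `j`-th block. -/
def dim (d : ℕ+ → ℕ+) (j : ℕ+) : ℕ := 2 * d j

open Real

noncomputable def wNum (x y : ℝ) : ℝ := √(min x y) + |x - y|

noncomputable def relDist (x y : ℝ) : ℝ := |x - y| / √(min x y)

lemma sqrt_le_sqrt_add_sub {x y : ℝ} (hy : 1 / 4 ≤ y) (hyx : y ≤ x) :
    √x ≤ √y + (x - y) := by
  have hy2 : 1 / 2 ≤ √y := by
    rw [Real.le_sqrt (by norm_num) (by linarith)]; linarith
  rw [Real.sqrt_le_left (by linarith)]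
  nlinarith [Real.sq_sqrt (show 0 ≤ y by linarith),
    mul_nonneg (sub_nonneg.2 hyx) (show 0 ≤ 2 * √y - 1 by linarith)]

lemma one_le_sqrt_min {x y : ℝ} (hx : 1 ≤ x) (hy : 1 ≤ y) : 1 ≤ √(min x y) :=
  Real.one_le_sqrt.2 (le_min hx hy)

lemma sqrt_min_le_sqrt_min_add_abs {x y z : ℝ} (hx : 1 ≤ x) (hz : 1 ≤ z) :
    √(min x y) ≤ √(min x z) + |z - y| := by
  rcases le_total (min x y) (min x z) with h | h
  · linarith [Real.sqrt_le_sqrt h, abs_nonneg (z - y)]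
  · have hmin : min x y - min x z ≤ |z - y| := by
      have := abs_min_sub_min_le_max x y x z
      rw [sub_self, abs_zero, max_eq_right (abs_nonneg _)] at this
      exact (le_abs_self _).trans (this.trans_eq (abs_sub_comm y z))
    have := sqrt_le_sqrt_add_sub (le_trans (by norm_num) (le_min hx hz)) h
    linarith

lemma wNum_nonneg (x y : ℝ) : 0 ≤ wNum x y :=
  add_nonneg (Real.sqrt_nonneg _) (abs_nonneg _)

lemma one_add_abs_le_wNum {x y : ℝ} (hx : 1 ≤ x) (hy : 1 ≤ y) : 1 + |x - y| ≤ wNum x y := by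
  unfold wNum; linarith [one_le_sqrt_min hx hy]

lemma wNum_le_wNum_of_abs_add_abs_le {x y z : ℝ} (hx : 1 ≤ x) (hz : 1 ≤ z)
    (h : |x - y| + |z - y| ≤ |x - z|) : wNum x y ≤ wNum x z := by
  unfold wNum; linarith [sqrt_min_le_sqrt_min_add_abs (y := y) hx hz]

lemma wNum_mul_two_add_le_of_le_of_le {x y z : ℝ} (hx : 1 ≤ x) (hxz : x ≤ z) (hzy : z ≤ y)
    (h : y - z ≤ z - x) :
    wNum x y * (2 + |z - y|) ≤ 2 * (wNum x z * wNum z y) := by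
  rw [wNum, wNum, wNum, min_eq_left (hxz.trans hzy), min_eq_left hxz, min_eq_left hzy,
    abs_sub_comm, abs_of_nonneg (by linarith), abs_sub_comm, abs_of_nonneg (by linarith),
    abs_sub_comm, abs_of_nonneg (by linarith)]
  set a := √x
  set c := √z
  set p := z - x
  set q := y - z
  have ha : 1 ≤ a := Real.one_le_sqrt.2 hx
  have hc2 : c ^ 2 = a ^ 2 + p := by
    simp only [a, c, p, Real.sq_sqrt (by linarith : (0 : ℝ) ≤ z),
      Real.sq_sqrt (by linarith : (0 : ℝ) ≤ x)]
    ring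
  have hq : 0 ≤ q := by simp only [q]; linarith
  have hac : a ≤ c := Real.sqrt_le_sqrt hxz
  have hca : c ≤ a + p := by nlinarith
  -- `(c - 1) (c + 1) ≥ p` and `c + 1 ≤ a + p + 1`
  have hc1 : p ≤ 2 * (a + p) * (c - 1) := by
    nlinarith [mul_nonneg (sub_nonneg.2 hca) (by linarith : 0 ≤ c - 1)]
  nlinarith [mul_nonneg hq (sub_nonneg.2 h), mul_nonneg hq (by linarith : 0 ≤ a - 1)]

lemma wNum_mul_two_add_le_of_ge_of_ge {x y z : ℝ} (hy : 1 ≤ y) (hyz : y ≤ z) (hzx : z ≤ x)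
    (h : z - y ≤ x - z) :
    wNum x y * (2 + |z - y|) ≤ 2 * (wNum x z * wNum z y) := by
  rw [wNum, wNum, wNum, min_eq_right (hyz.trans hzx), min_eq_right hzx, min_eq_right hyz,
    abs_of_nonneg (by linarith : 0 ≤ x - y), abs_of_nonneg (by linarith : 0 ≤ x - z),
    abs_of_nonneg (by linarith : 0 ≤ z - y)]
  set a := √y
  set b := √z
  set p := x - z
  set q := z - y
  have ha : 1 ≤ a := Real.one_le_sqrt.2 hy
  have hb2 : b ^ 2 = a ^ 2 + q := by
    simp only [a, b, q, Real.sq_sqrt (by linarith : (0 : ℝ) ≤ z),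
      Real.sq_sqrt (by linarith : (0 : ℝ) ≤ y)]
    ring
  have hq : 0 ≤ q := by simp only [q]; linarith
  have hab : a ≤ b := Real.sqrt_le_sqrt hyz
  have hba : b ≤ a + q := by nlinarith
  -- `(b - a) (a + b) = q` and `a + b ≤ 2 a + q`
  have hb1 : q ≤ 2 * (b - a) * (a + q) := by
    nlinarith [mul_nonneg (sub_nonneg.2 hba) (sub_nonneg.2 hab)]
  nlinarith [mul_nonneg (sub_nonneg.2 h) (by linarith : 0 ≤ 2 * a - 2 + q),
    mul_nonneg hq (by linarith : 0 ≤ a - 1)]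

lemma wNum_mul_two_add_le {x y z : ℝ} (hx : 1 ≤ x) (hy : 1 ≤ y) (hz : 1 ≤ z)
    (h : |z - y| ≤ |x - z|) :
    wNum x y * (2 + |z - y|) ≤ 2 * (wNum x z * wNum z y) := by
  -- unless `z` lies between `x` and `y`, the hypothesis puts `y` between `x` and `z`
  have of_between (hW : |x - y| + |z - y| ≤ |x - z|) :
      wNum x y * (2 + |z - y|) ≤ 2 * (wNum x z * wNum z y) := by
    have h1 := wNum_le_wNum_of_abs_add_abs_le hx hz hW
    have h2 := one_add_abs_le_wNum hz hy
    nlinarith [abs_nonneg (z - y), wNum_nonneg x y]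
  rcases le_total x z with hxz | hzx <;> rcases le_total z y with hzy | hyz
  · refine wNum_mul_two_add_le_of_le_of_le hx hxz hzy ?_
    rw [abs_of_nonpos (by linarith : z - y ≤ 0), abs_of_nonpos (by linarith : x - z ≤ 0)] at h
    linarith
  · apply of_between
    rw [abs_of_nonneg (by linarith : 0 ≤ z - y), abs_of_nonpos (by linarith : x - z ≤ 0)] at h ⊢
    rw [abs_of_nonpos (by linarith : x - y ≤ 0)]
    linarith
  · apply of_between
    rw [abs_of_nonpos (by linarith : z - y ≤ 0), abs_of_nonneg (by linarith : 0 ≤ x - z)] at h ⊢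
    rw [abs_of_nonneg (by linarith : 0 ≤ x - y)]
    linarith
  · refine wNum_mul_two_add_le_of_ge_of_ge hy hyz hzx ?_
    rwa [abs_of_nonneg (by linarith : 0 ≤ z - y), abs_of_nonneg (by linarith : 0 ≤ x - z)] at h

lemma relDist_comm (x y : ℝ) : relDist x y = relDist y x := by
  rw [relDist, relDist, min_comm, abs_sub_comm]

lemma relDist_nonneg (x y : ℝ) : 0 ≤ relDist x y :=
  div_nonneg (abs_nonneg _) (Real.sqrt_nonneg _)

lemma relDist_le_relDist {x y x' y' : ℝ} (hm : 0 < min x' y') (hmin : min x' y' ≤ min x y)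
    (habs : |x - y| ≤ |x' - y'|) : relDist x y ≤ relDist x' y' :=
  div_le_div₀ (abs_nonneg _) habs (Real.sqrt_pos.2 hm) (Real.sqrt_le_sqrt hmin)

lemma relDist_le_add_add_mul {x y z : ℝ} (hx : 1 ≤ x) (hy : 1 ≤ y) (hz : 1 ≤ z) :
    relDist x y ≤ relDist x z + relDist z y + relDist x z * relDist z y := by
  wlog hxy : x ≤ y generalizing x y
  · have := this hy hx (le_of_not_ge hxy)
    rw [relDist_comm y x, relDist_comm y z, relDist_comm z x] at this
    linarith [mul_comm (relDist x z) (relDist z y)]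
  have h0 := relDist_nonneg x z
  have h0' := relDist_nonneg z y
  rcases le_total z x with hzx | hxz
  · have : relDist x y ≤ relDist z y := relDist_le_relDist (lt_min (by linarith) (by linarith))
      (by rw [min_eq_left (hzx.trans hxy), min_eq_left hxy]; exact hzx)
      (by rw [abs_sub_comm, abs_of_nonneg (by linarith), abs_sub_comm,
        abs_of_nonneg (by linarith)]; linarith)
    nlinarith
  rcases le_total z y with hzy | hyz
  · unfold relDist
    rw [min_eq_left hxy, min_eq_left hxz, min_eq_left hzy, abs_sub_comm,
      abs_of_nonneg (by linarith), abs_sub_comm, abs_of_nonneg (by linarith), abs_sub_comm,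
      abs_of_nonneg (by linarith)]
    have hsx : 0 < √x := by positivity
    have hsz : 0 < √z := by positivity
    have := sqrt_le_sqrt_add_sub (by linarith) hxz
    rw [div_add_div _ _ hsx.ne' hsz.ne', div_mul_div_comm,
      div_add_div _ _ (by positivity) (by positivity), div_le_div_iff₀ hsx (by positivity)]
    nlinarith [mul_nonneg (sub_nonneg.2 hzy) (sub_nonneg.2 this)]
  · have : relDist x y ≤ relDist x z := relDist_le_relDist (lt_min (by linarith) (by linarith))
      (by rw [min_eq_left (hxy.trans hyz), min_eq_left hxy])
      (by rw [abs_sub_comm, abs_of_nonneg (by linarith), abs_sub_comm,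
        abs_of_nonneg (by linarith)]; linarith)
    nlinarith

lemma one_le_coe_pnat (i : ℕ+) : (1 : ℝ) ≤ i := Nat.one_le_cast.2 i.pos

lemma coe_min_pnat (i j : ℕ+) : ((min i j : ℕ+) : ℝ) = min (i : ℝ) j := by
  rcases le_total i j with h | h <;> simp [h]

lemma sqrt_min_pos (i j : ℕ+) : 0 < √(min (i : ℝ) j) :=
  zero_lt_one.trans_le (one_le_sqrt_min (one_le_coe_pnat i) (one_le_coe_pnat j))

lemma w_eq_wNum_div (i j : ℕ+) : w i j = wNum i j / √(min (i : ℝ) j) := rfl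

lemma w_eq_one_add_relDist (i j : ℕ+) : w i j = 1 + relDist i j := by
  rw [w, relDist, add_div, div_self (sqrt_min_pos i j).ne']

lemma w_comm (i j : ℕ+) : w i j = w j i := by
  rw [w_eq_one_add_relDist, w_eq_one_add_relDist, relDist_comm]

lemma one_le_w (i j : ℕ+) : 1 ≤ w i j := by
  rw [w_eq_one_add_relDist]; linarith [relDist_nonneg (i : ℝ) j]

lemma w_le_w_mul_w (i j k : ℕ+) : w i j ≤ w i k * w k j := by
  simp only [w_eq_one_add_relDist]
  linarith [relDist_le_add_add_mul (one_le_coe_pnat i) (one_le_coe_pnat j) (one_le_coe_pnat k)]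

noncomputable def msWeight (s β : ℝ) (i j : ℕ+) : ℝ := ((min i j : ℕ+) : ℝ) ^ β * w i j ^ s

lemma msWeight_comm (s β : ℝ) (i j : ℕ+) : msWeight s β i j = msWeight s β j i := by
  rw [msWeight, msWeight, min_comm, w_comm]

lemma msWeight_eq_wNum_rpow_mul_w_rpow (s β : ℝ) (i j : ℕ+) :
    msWeight s β i j = wNum i j ^ (2 * β) * w i j ^ (s - 2 * β) := by
  have hw : 0 < w i j := zero_lt_one.trans_le (one_le_w i j)
  have hsqrt : √(min (i : ℝ) j) ^ (2 * β) = min (i : ℝ) j ^ β := by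
    rw [Real.rpow_mul (Real.sqrt_nonneg _), Real.rpow_two, Real.sq_sqrt (by positivity)]
  have hwNum : wNum i j = √(min (i : ℝ) j) * w i j := by
    rw [w_eq_wNum_div, mul_div_cancel₀ _ (sqrt_min_pos i j).ne']
  rw [msWeight, hwNum, Real.mul_rpow (Real.sqrt_nonneg _) hw.le, hsqrt, mul_assoc,
    ← Real.rpow_add hw, coe_min_pnat]
  ring_nf

section msWeight

variable {s β : ℝ}

lemma one_le_msWeight (hs : 0 ≤ s) (hβ : 0 ≤ β) (i j : ℕ+) : 1 ≤ msWeight s β i j :=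
  one_le_mul_of_one_le_of_one_le (Real.one_le_rpow (one_le_coe_pnat _) hβ)
    (Real.one_le_rpow (one_le_w i j) hs)

lemma msWeight_pos (hs : 0 ≤ s) (hβ : 0 ≤ β) (i j : ℕ+) : 0 < msWeight s β i j :=
  zero_lt_one.trans_le (one_le_msWeight hs hβ i j)

lemma msWeight_le_of_abs_sub_le (hβ : 0 ≤ β) (hβs : 2 * β ≤ s) {i j k : ℕ+}
    (h : |(k : ℝ) - j| ≤ |(i : ℝ) - k|) :
    msWeight s β i j ≤
      (2 / (2 + |(k : ℝ) - j|)) ^ (2 * β) * (msWeight s β i k * msWeight s β k j) := by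
  have hwNum : wNum i j ≤ 2 / (2 + |(k : ℝ) - j|) * (wNum i k * wNum k j) := by
    rw [div_mul_eq_mul_div, le_div_iff₀ (by positivity)]
    exact wNum_mul_two_add_le (one_le_coe_pnat i) (one_le_coe_pnat j) (one_le_coe_pnat k) h
  have hw (a b : ℕ+) : 0 ≤ w a b := zero_le_one.trans (one_le_w a b)
  have := wNum_nonneg i j
  have := wNum_nonneg i k
  have := wNum_nonneg k j
  have := hw i j
  simp only [msWeight_eq_wNum_rpow_mul_w_rpow]
  calc wNum i j ^ (2 * β) * w i j ^ (s - 2 * β)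
      ≤ (2 / (2 + |(k : ℝ) - j|) * (wNum i k * wNum k j)) ^ (2 * β) *
          (w i k * w k j) ^ (s - 2 * β) := by
        gcongr
        exact w_le_w_mul_w i j k
    _ = _ := by
        rw [Real.mul_rpow (by positivity) (by positivity),
          Real.mul_rpow (wNum_nonneg _ _) (wNum_nonneg _ _),
          Real.mul_rpow (hw i k) (hw k j)]
        ring

end msWeight

noncomputable def decay (β x : ℝ) : ℝ := (2 / (2 + x)) ^ (2 * β) / (1 + x)

lemma decay_zero (β : ℝ) : decay β 0 = 1 := by simp [decay]

lemma decay_nonneg (β : ℝ) {x : ℝ} (hx : 0 ≤ x) : 0 ≤ decay β x := by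
  unfold decay; positivity

lemma one_add_mul_one_sub_inv_le_rpow {t g : ℝ} (ht : 0 < t) (hg : 0 ≤ g) :
    1 + g * (1 - t⁻¹) ≤ t ^ g := by
  calc 1 + g * (1 - t⁻¹) ≤ 1 + g * Real.log t := by
        gcongr; exact Real.one_sub_inv_le_log_of_pos ht
    _ ≤ Real.exp (Real.log t * g) := by linarith [Real.add_one_le_exp (Real.log t * g)]
    _ = t ^ g := (Real.rpow_def_of_pos ht g).symm

section decay

variable {β : ℝ}

lemma decay_le_sub (hβ : 0 < β) {x : ℝ} (hx : 1 ≤ x) :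
    decay β x ≤
      3 * 2 ^ (2 * β) / (4 * β) * (((1 + x) ^ (2 * β))⁻¹ - ((2 + x) ^ (2 * β))⁻¹) := by
  have key := one_add_mul_one_sub_inv_le_rpow (t := (2 + x) / (1 + x)) (by positivity)
    (by positivity : 0 ≤ 2 * β)
  rw [Real.div_rpow (by positivity) (by positivity), inv_div,
    show 1 - (1 + x) / (2 + x) = (2 + x)⁻¹ by field_simp; ring] at key
  rw [decay, Real.div_rpow (by positivity) (by positivity)]
  set A := (1 + x) ^ (2 * β)
  set B := (2 + x) ^ (2 * β)
  have hA : 0 < A := by positivity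
  have hB : 0 < B := by positivity
  have hdiff : 2 * β * A ≤ (B - A) * (2 + x) := by
    rw [le_div_iff₀ hA] at key
    have := mul_le_mul_of_nonneg_right key (by positivity : (0 : ℝ) ≤ 2 + x)
    field_simp at this
    linarith
  rw [inv_sub_inv hA.ne' hB.ne', div_div, div_le_iff₀ (by positivity)]
  field_simp
  refine le_of_mul_le_mul_right ?_ (by positivity : (0 : ℝ) < 2 + x)
  nlinarith [mul_le_mul_of_nonneg_left hdiff (by linarith : (0 : ℝ) ≤ 3 * (1 + x)),
    mul_nonneg (mul_nonneg hβ.le hA.le) (by linarith : (0 : ℝ) ≤ x - 1)]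

lemma sum_range_decay_succ_le (hβ : 0 < β) (N : ℕ) :
    ∑ n ∈ Finset.range N, decay β (n + 1) ≤ 3 / (4 * β) := by
  set τ : ℕ → ℝ := fun n => 3 * 2 ^ (2 * β) / (4 * β) * (((n : ℝ) + 2) ^ (2 * β))⁻¹
  have hτ0 : τ 0 = 3 / (4 * β) := by
    simp only [τ, Nat.cast_zero, zero_add]
    field_simp
  calc ∑ n ∈ Finset.range N, decay β (n + 1)
      ≤ ∑ n ∈ Finset.range N, (τ n - τ (n + 1)) := by
        refine Finset.sum_le_sum fun n _ => ?_
        have := decay_le_sub hβ (by linarith [n.cast_nonneg (α := ℝ)] : (1 : ℝ) ≤ n + 1)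
        rw [show (1 : ℝ) + (n + 1) = n + 2 by ring, show (2 : ℝ) + (n + 1) = n + 1 + 2 by ring,
          mul_sub] at this
        simpa only [τ, Nat.cast_add_one] using this
    _ = τ 0 - τ N := Finset.sum_range_sub' τ N
    _ ≤ 3 / (4 * β) := by
        rw [hτ0, sub_le_self_iff]; positivity

lemma summable_decay_nat_succ (hβ : 0 < β) : Summable fun n : ℕ => decay β (n + 1) :=
  summable_of_sum_range_le (fun n => decay_nonneg β (by positivity)) (sum_range_decay_succ_le hβ)

lemma tsum_decay_nat_succ_le (hβ : 0 < β) : ∑' n : ℕ, decay β (n + 1) ≤ 3 / (4 * β) :=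
  Real.tsum_le_of_sum_range_le (fun n => decay_nonneg β (by positivity))
    (sum_range_decay_succ_le hβ)

lemma summable_decay_abs_int (hβ : 0 < β) : Summable fun m : ℤ => decay β |(m : ℝ)| := by
  have hnat : Summable fun n : ℕ => decay β n :=
    (summable_nat_add_iff 1).1 (by simpa using summable_decay_nat_succ hβ)
  exact .of_nat_of_neg (by simpa using hnat) (by simpa using hnat)

lemma tsum_decay_abs_int_le (hβ : 0 < β) :
    ∑' m : ℤ, decay β |(m : ℝ)| ≤ 1 + 3 / (2 * β) := by
  rw [tsum_int_eq_zero_add_two_mul_tsum_pnat (fun m => by simp) (summable_decay_abs_int hβ)]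
  have := tsum_decay_nat_succ_le hβ
  simp only [Int.cast_zero, abs_zero, decay_zero, Int.cast_natCast, Nat.abs_cast, nsmul_eq_mul,
    Nat.cast_ofNat]
  rw [tsum_pnat_eq_tsum_succ (f := fun n : ℕ => decay β n)]
  push_cast
  have h : 2 * (3 / (4 * β)) = 3 / (2 * β) := by field_simp; ring
  linarith

lemma injective_pnat_sub (c : ℕ+) : Function.Injective fun k : ℕ+ => (k : ℤ) - c :=
  fun k l h => PNat.coe_injective (by simpa using h)

lemma summable_decay_abs_sub (hβ : 0 < β) (c : ℕ+) :
    Summable fun k : ℕ+ => decay β |(k : ℝ) - c| := by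
  simpa [Function.comp_def] using
    (summable_decay_abs_int hβ).comp_injective (injective_pnat_sub c)

lemma tsum_decay_abs_sub_le (hβ : 0 < β) (c : ℕ+) :
    ∑' k : ℕ+, decay β |(k : ℝ) - c| ≤ 1 + 3 / (2 * β) := by
  refine le_trans (le_of_eq ?_) ((tsum_comp_le_tsum_of_inj (summable_decay_abs_int hβ)
    (fun m => decay_nonneg β (abs_nonneg _)) (injective_pnat_sub c)).trans
      (tsum_decay_abs_int_le hβ))
  simp [Function.comp_def]

end decay

noncomputable def productBound (s β : ℝ) (i j k : ℕ+) : ℝ :=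
  (msWeight s β i k * (msWeight s β k j * (1 + |(k : ℝ) - j|)))⁻¹

section productBound

variable {s β : ℝ}

lemma productBound_pos (hs : 0 ≤ s) (hβ : 0 ≤ β) (i j k : ℕ+) :
    0 < productBound s β i j k := by
  have := msWeight_pos hs hβ i k
  have := msWeight_pos hs hβ k j
  unfold productBound; positivity

lemma msWeight_mul_productBound_le (hβ : 0 < β) (hβs : 2 * β ≤ s) (i j k : ℕ+) :
    msWeight s β i j * productBound s β i j k ≤
      decay β |(k : ℝ) - i| + decay β |(k : ℝ) - j| := by
  have hs : 0 ≤ s := by linarith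
  have := msWeight_pos hs hβ.le i k
  have := msWeight_pos hs hβ.le k j
  have of_le (r : ℝ) (hr : 0 ≤ r) (hrq : r ≤ |(k : ℝ) - j|)
      (h : msWeight s β i j ≤ (2 / (2 + r)) ^ (2 * β) * (msWeight s β i k * msWeight s β k j)) :
      msWeight s β i j * productBound s β i j k ≤ decay β r := by
    calc msWeight s β i j * productBound s β i j k
        ≤ (2 / (2 + r)) ^ (2 * β) * (msWeight s β i k * msWeight s β k j) *
            productBound s β i j k :=
          mul_le_mul_of_nonneg_right h (productBound_pos hs hβ.le i j k).le
      _ = (2 / (2 + r)) ^ (2 * β) / (1 + |(k : ℝ) - j|) := by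
          unfold productBound; field_simp
      _ ≤ decay β r := by unfold decay; gcongr
  rcases le_total |(k : ℝ) - j| |(i : ℝ) - k| with h | h
  · have := of_le _ (abs_nonneg _) le_rfl (msWeight_le_of_abs_sub_le hβ.le hβs h)
    linarith [decay_nonneg β (abs_nonneg ((k : ℝ) - i))]
  · rw [abs_sub_comm] at h
    have h' := msWeight_le_of_abs_sub_le (s := s) hβ.le hβs (i := j) (j := i) (k := k)
      (by rwa [abs_sub_comm (j : ℝ)])
    rw [msWeight_comm s β j i, msWeight_comm s β j k, msWeight_comm s β k i,
      mul_comm (msWeight s β k j)] at h'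
    have := of_le _ (abs_nonneg _) h h'
    linarith [decay_nonneg β (abs_nonneg ((k : ℝ) - j))]

lemma summable_productBound (hβ : 0 < β) (hβs : 2 * β ≤ s) (i j : ℕ+) :
    Summable (productBound s β i j) := by
  have hs : 0 ≤ s := by linarith
  refine Summable.of_nonneg_of_le (fun k => (productBound_pos hs hβ.le i j k).le) (fun k => ?_)
    (((summable_decay_abs_sub hβ i).add (summable_decay_abs_sub hβ j)).mul_left
      (msWeight s β i j)⁻¹)
  rw [le_inv_mul_iff₀ (msWeight_pos hs hβ.le i j)]
  exact msWeight_mul_productBound_le hβ hβs i j k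

lemma msWeight_mul_tsum_productBound_le (hβ : 0 < β) (hβs : 2 * β ≤ s) (i j : ℕ+) :
    msWeight s β i j * ∑' k, productBound s β i j k ≤ 2 + 3 / β := by
  have hi := summable_decay_abs_sub hβ i
  have hj := summable_decay_abs_sub hβ j
  rw [← tsum_mul_left]
  calc ∑' k, msWeight s β i j * productBound s β i j k
      ≤ ∑' k : ℕ+, (decay β |(k : ℝ) - i| + decay β |(k : ℝ) - j|) :=
        ((summable_productBound hβ hβs i j).mul_left _).tsum_le_tsum
          (msWeight_mul_productBound_le hβ hβs i j) (hi.add hj)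
    _ = ∑' k : ℕ+, decay β |(k : ℝ) - i| + ∑' k : ℕ+, decay β |(k : ℝ) - j| := hi.tsum_add hj
    _ ≤ (1 + 3 / (2 * β)) + (1 + 3 / (2 * β)) :=
        add_le_add (tsum_decay_abs_sub_le hβ i) (tsum_decay_abs_sub_le hβ j)
    _ = 2 + 3 / β := by field_simp; ring

lemma two_add_three_div_le (hβ : 0 < β) (hβs : 2 * β ≤ s) :
    2 + 3 / β ≤ 2 ^ (s / 2 + 2) / β := by
  have hexp : 1 + β * Real.log 2 ≤ 2 ^ β := by
    rw [Real.rpow_def_of_pos two_pos]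
    linarith [Real.add_one_le_exp (Real.log 2 * β), mul_comm β (Real.log 2)]
  have hmono : (2 : ℝ) ^ β ≤ 2 ^ (s / 2) :=
    Real.rpow_le_rpow_of_exponent_le one_le_two (by linarith)
  rw [Real.rpow_add two_pos, le_div_iff₀ hβ, add_mul, div_mul_cancel₀ _ hβ.ne']
  norm_num
  nlinarith [Real.log_two_gt_d9]

end productBound

lemma ContinuousLinearMap.norm_comp_le_of_mul_norm_le {𝕜 E F G : Type*}
    [NontriviallyNormedField 𝕜] [SeminormedAddCommGroup E] [SeminormedAddCommGroup F]
    [SeminormedAddCommGroup G] [NormedSpace 𝕜 E] [NormedSpace 𝕜 F] [NormedSpace 𝕜 G]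
    {X : F →L[𝕜] G} {Y : E →L[𝕜] F} {a b MX MY : ℝ} (ha : 0 < a) (hb : 0 < b)
    (hX : a * ‖X‖ ≤ MX) (hY : b * ‖Y‖ ≤ MY) : ‖X.comp Y‖ ≤ MX * MY * (a * b)⁻¹ := by
  rw [← div_eq_mul_inv, le_div_iff₀ (mul_pos ha hb)]
  calc ‖X.comp Y‖ * (a * b) ≤ ‖X‖ * ‖Y‖ * (a * b) := by gcongr; exact X.opNorm_comp_le Y
    _ = (a * ‖X‖) * (b * ‖Y‖) := by ring
    _ ≤ MX * MY := mul_le_mul hX hY (by positivity) ((by positivity : 0 ≤ a * ‖X‖).trans hX)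

section Series

variable {E : Type*} [SeminormedAddCommGroup E] {s β M : ℝ} {i j : ℕ+} {f : ℕ+ → E}

lemma summable_norm_of_norm_le_mul_productBound (hβ : 0 < β) (hβs : 2 * β ≤ s)
    (hf : ∀ k, ‖f k‖ ≤ M * productBound s β i j k) : Summable fun k => ‖f k‖ :=
  .of_nonneg_of_le (fun _ => norm_nonneg _) hf ((summable_productBound hβ hβs i j).mul_left M)

lemma msWeight_mul_norm_tsum_le (hβ : 0 < β) (hβs : 2 * β ≤ s)
    (hf : ∀ k, ‖f k‖ ≤ M * productBound s β i j k) :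
    msWeight s β i j * ‖∑' k, f k‖ ≤ 2 ^ (s / 2 + 2) / β * M := by
  have hs : 0 ≤ s := by linarith
  have hM : 0 ≤ M := nonneg_of_mul_nonneg_left ((norm_nonneg _).trans (hf 1))
    (productBound_pos hs hβ.le i j 1)
  have := msWeight_pos hs hβ.le i j
  calc msWeight s β i j * ‖∑' k, f k‖
      ≤ msWeight s β i j * ∑' k, M * productBound s β i j k := by
        gcongr
        exact tsum_of_norm_bounded ((summable_productBound hβ hβs i j).mul_left M).hasSum hf
    _ = M * (msWeight s β i j * ∑' k, productBound s β i j k) := by rw [tsum_mul_left]; ring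
    _ ≤ M * (2 ^ (s / 2 + 2) / β) := by
        gcongr
        exact (msWeight_mul_tsum_productBound_le hβ hβs i j).trans (two_add_three_div_le hβ hβs)
    _ = 2 ^ (s / 2 + 2) / β * M := mul_comm _ _

end Series

theorem product_Msβ_Msβplus_mem_Msβ_general (s β : ℝ) (hβ : 0 < β)
    (hβs : β ≤ min (s / 2) 1) (d : ℕ+ → ℕ+)
    (A B : ∀ i j : ℕ+,
      EuclideanSpace ℂ (Fin (dim d j)) →L[ℂ] EuclideanSpace ℂ (Fin (dim d i)))
    (MA MB : ℝ)
    (hA : ∀ i j : ℕ+, ((min i j : ℕ+) : ℝ) ^ β * w i j ^ s * ‖A i j‖ ≤ MA)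
    (hB : ∀ i j : ℕ+, ((min i j : ℕ+) : ℝ) ^ β * w i j ^ s * (1 + |(i : ℝ) - (j : ℝ)|) *
      ‖B i j‖ ≤ MB) :
    (∀ i j : ℕ+, Summable fun k : ℕ+ => ‖(A i k).comp (B k j)‖) ∧
    (∀ i j : ℕ+, Summable fun k : ℕ+ => ‖(B i k).comp (A k j)‖) ∧
    (∀ i j : ℕ+, ((min i j : ℕ+) : ℝ) ^ β * w i j ^ s *
      ‖∑' k : ℕ+, (A i k).comp (B k j)‖ ≤ 2 ^ (s / 2 + 2) / β * MA * MB) ∧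
    (∀ i j : ℕ+, ((min i j : ℕ+) : ℝ) ^ β * w i j ^ s *
      ‖∑' k : ℕ+, (B i k).comp (A k j)‖ ≤ 2 ^ (s / 2 + 2) / β * MA * MB) := by
  have h2βs : 2 * β ≤ s := by linarith [hβs.trans (min_le_left _ _)]
  have hν := msWeight_pos (by linarith) hβ.le (s := s)
  have hAB (i j k : ℕ+) : ‖(A i k).comp (B k j)‖ ≤ MA * MB * productBound s β i j k :=
    ContinuousLinearMap.norm_comp_le_of_mul_norm_le (hν i k) (by have := hν k j; positivity)
      (hA i k) (hB k j)
  have hBA (i j k : ℕ+) : ‖(B i k).comp (A k j)‖ ≤ MA * MB * productBound s β j i k :=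
    calc ‖(B i k).comp (A k j)‖
        ≤ MB * MA * (msWeight s β i k * (1 + |(i : ℝ) - k|) * msWeight s β k j)⁻¹ :=
          ContinuousLinearMap.norm_comp_le_of_mul_norm_le (by have := hν i k; positivity)
            (hν k j) (hB i k) (hA k j)
      _ = MA * MB * productBound s β j i k := by
          rw [productBound, msWeight_comm s β j k, msWeight_comm s β k i, abs_sub_comm]; ring
  refine ⟨fun i j => summable_norm_of_norm_le_mul_productBound hβ h2βs (hAB i j),
    fun i j => summable_norm_of_norm_le_mul_productBound hβ h2βs (hBA i j),
    fun i j => ?_, fun i j => ?_⟩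
  · rw [mul_assoc _ MA]
    exact msWeight_mul_norm_tsum_le hβ h2βs (hAB i j)
  · rw [mul_assoc _ MA]
    change msWeight s β i j * _ ≤ _
    rw [msWeight_comm]
    exact msWeight_mul_norm_tsum_le hβ h2βs (hBA i j)

/-- Let `s > 0`, `0 < β ≤ min{s/2, 1}`, let `A ∈ M_{s,β}` (i.e. its blocks satisfy
`(i∧j)^β w(i,j)^s ‖A_i^j‖ ≤ |A|_{s,β} = MA`) and `B ∈ M_{s,β}^+` (i.e. its blocks satisfy
`(i∧j)^β w(i,j)^s (1+|i−j|) ‖B_i^j‖ ≤ |B|_{s,β+} = MB`).  Blocks are viewed as (continuous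
linear) operators `ℂ^{2d_j} → ℂ^{2d_i}` with the `ℓ²`-operator norm.  Then the blockwise
products `(AB)_i^j = ∑_k A_i^k B_k^j` and `(BA)_i^j = ∑_k B_i^k A_k^j` converge absolutely in
operator norm, and `AB, BA ∈ M_{s,β}` with
`|AB|_{s,β}, |BA|_{s,β} ≤ (2^{s/2+2}/β)·|A|_{s,β}·|B|_{s,β+}`. -/
theorem product_Msβ_Msβplus_mem_Msβ (s β : ℝ) (hs : 0 < s) (hβ : 0 < β)
    (hβs : β ≤ min (s / 2) 1) (d : ℕ+ → ℕ+)
    (A B : ∀ i j : ℕ+,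
      EuclideanSpace ℂ (Fin (dim d j)) →L[ℂ] EuclideanSpace ℂ (Fin (dim d i)))
    (MA MB : ℝ)
    (hA : ∀ i j : ℕ+, ((min i j : ℕ+) : ℝ) ^ β * w i j ^ s * ‖A i j‖ ≤ MA)
    (hB : ∀ i j : ℕ+, ((min i j : ℕ+) : ℝ) ^ β * w i j ^ s * (1 + |(i : ℝ) - (j : ℝ)|) *
      ‖B i j‖ ≤ MB) :
    (∀ i j : ℕ+, Summable fun k : ℕ+ => ‖(A i k).comp (B k j)‖) ∧
    (∀ i j : ℕ+, Summable fun k : ℕ+ => ‖(B i k).comp (A k j)‖) ∧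
    (∀ i j : ℕ+, ((min i j : ℕ+) : ℝ) ^ β * w i j ^ s *
      ‖∑' k : ℕ+, (A i k).comp (B k j)‖ ≤ 2 ^ (s / 2 + 2) / β * MA * MB) ∧
    (∀ i j : ℕ+, ((min i j : ℕ+) : ℝ) ^ β * w i j ^ s *
      ‖∑' k : ℕ+, (B i k).comp (A k j)‖ ≤ 2 ^ (s / 2 + 2) / β * MA * MB) :=
  product_Msβ_Msβplus_mem_Msβ_general s β hβ hβs d A B MA MB hA hB
end

section
/- Let s ≥ 0 and 0 ≤ β' < β ≤ 1/2. Let B be the infinite matrix indexed by positive integers with entries b_i^j = i^{s+β'} · j^{−s} · (i∧j)^{−β} · (1+|i−j|)^{−1} · w(i,j)^{−s}. Then B defines a bounded linear operator on ℓ²(ℕ⁺) whose operator norm satisfies ‖B‖_{ℓ²→ℓ²} ≤ 2^{s+4}/(β−β'). -/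
/-- The matrix entries `b_i^j = i^{s+β'} j^{−s} (i∧j)^{−β} (1+|i−j|)^{−1} w(i,j)^{−s}`. -/
noncomputable def bEnt (s β β' : ℝ) (i j : ℕ+) : ℝ :=
  (i : ℝ) ^ (s + β') * (j : ℝ) ^ (-s) * ((min i j : ℕ+) : ℝ) ^ (-β) *
    (1 + |(i : ℝ) - (j : ℝ)|)⁻¹ * w i j ^ (-s)

open Finset Real

theorem sub_one_rpow_le_rpow_sub_mul {p x : ℝ} (hp0 : 0 ≤ p) (hp1 : p ≤ 1) (hx : 1 ≤ x) :
    (x - 1) ^ p ≤ x ^ p - p * x ^ (p - 1) := by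
  have hx0 : 0 < x := by linarith
  have hs : -1 ≤ -x⁻¹ := by
    simpa using inv_le_one_of_one_le₀ hx
  calc (x - 1) ^ p = x ^ p * (1 + -x⁻¹) ^ p := by
        rw [← mul_rpow hx0.le (by linarith)]
        congr 1
        field_simp
        ring
    _ ≤ x ^ p * (1 + p * -x⁻¹) :=
        mul_le_mul_of_nonneg_left (rpow_one_add_le_one_add_mul_self hs hp0 hp1) (by positivity)
    _ = x ^ p - p * x ^ (p - 1) := by
        rw [rpow_sub_one hx0.ne']
        ring

theorem mul_rpow_neg_le_sub_one_rpow_neg_sub {a x : ℝ} (ha0 : 0 ≤ a) (ha1 : a ≤ 1)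
    (hx : 1 < x) : a * x ^ (-(1 + a)) ≤ (x - 1) ^ (-a) - x ^ (-a) := by
  have hx0 : 0 < x := by linarith
  have hy0 : 0 < x - 1 := by linarith
  have key := sub_one_rpow_le_rpow_sub_mul ha0 ha1 hx.le
  rw [rpow_neg hx0.le a, rpow_neg hy0.le a]
  set u := (x - 1) ^ a
  set v := x ^ a
  have hu : 0 < u := rpow_pos_of_pos hy0 a
  have huv : u ≤ v := rpow_le_rpow hy0.le (by linarith) ha0
  have hv : 0 < v := hu.trans_le huv
  calc a * x ^ (-(1 + a)) = a * x ^ (a - 1) / (v * v) := by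
        rw [mul_div_assoc, ← rpow_add hx0, ← rpow_sub hx0]
        ring_nf
    _ ≤ (v - u) / (v * v) := by gcongr; linarith
    _ ≤ (v - u) / (u * v) := by gcongr
    _ = u⁻¹ - v⁻¹ := by field_simp

theorem sum_range_add_one_rpow_neg_le {a : ℝ} (ha0 : 0 ≤ a) (ha1 : a < 1) (N : ℕ) :
    ∑ n ∈ range N, ((n : ℝ) + 1) ^ (-a) ≤ (N : ℝ) ^ (1 - a) / (1 - a) := by
  have h1a : 0 < 1 - a := by linarith
  have hterm : ∀ n : ℕ, ((n : ℝ) + 1) ^ (-a) ≤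
      (((n + 1 : ℕ) : ℝ) ^ (1 - a) - (n : ℝ) ^ (1 - a)) / (1 - a) := by
    intro n
    have h := sub_one_rpow_le_rpow_sub_mul h1a.le (by linarith)
      (le_add_of_nonneg_left n.cast_nonneg : (1 : ℝ) ≤ n + 1)
    rw [le_div_iff₀ h1a]
    push_cast
    simp only [add_sub_cancel_right, sub_sub_cancel_left] at h
    linarith
  calc ∑ n ∈ range N, ((n : ℝ) + 1) ^ (-a)
      ≤ ∑ n ∈ range N, (((n + 1 : ℕ) : ℝ) ^ (1 - a) - (n : ℝ) ^ (1 - a)) / (1 - a) :=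
        sum_le_sum fun n _ => hterm n
    _ = (N : ℝ) ^ (1 - a) / (1 - a) := by
        rw [← sum_div, sum_range_sub (fun n : ℕ => (n : ℝ) ^ (1 - a)), Nat.cast_zero,
          zero_rpow h1a.ne', sub_zero]

theorem summable_add_two_rpow_neg_and_tsum_le {a : ℝ} (ha0 : 0 < a) (ha1 : a ≤ 1) :
    Summable (fun n : ℕ => ((n : ℝ) + 2) ^ (-(1 + a))) ∧
      ∑' n : ℕ, ((n : ℝ) + 2) ^ (-(1 + a)) ≤ 1 / a := by
  have hnonneg : ∀ n : ℕ, 0 ≤ ((n : ℝ) + 2) ^ (-(1 + a)) := fun n => by positivity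
  have hpartial : ∀ N : ℕ, ∑ n ∈ range N, ((n : ℝ) + 2) ^ (-(1 + a)) ≤ 1 / a := by
    intro N
    set f : ℕ → ℝ := fun n => ((n : ℝ) + 1) ^ (-a)
    have hterm : ∀ n : ℕ, ((n : ℝ) + 2) ^ (-(1 + a)) ≤ (f n - f (n + 1)) / a := by
      intro n
      have h := mul_rpow_neg_le_sub_one_rpow_neg_sub ha0.le ha1
        (by linarith [n.cast_nonneg (α := ℝ)] : (1 : ℝ) < n + 2)
      rw [le_div_iff₀ ha0]
      simp only [f]
      push_cast
      ring_nf at h ⊢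
      linarith
    calc ∑ n ∈ range N, ((n : ℝ) + 2) ^ (-(1 + a))
        ≤ ∑ n ∈ range N, (f n - f (n + 1)) / a := sum_le_sum fun n _ => hterm n
      _ = (f 0 - f N) / a := by rw [← sum_div, sum_range_sub']
      _ ≤ 1 / a := by
          gcongr
          simp only [f, Nat.cast_zero, zero_add, one_rpow]
          linarith [rpow_nonneg (by positivity : (0 : ℝ) ≤ N + 1) (-a)]
  exact ⟨summable_of_sum_range_le hnonneg hpartial, tsum_le_of_sum_range_le hnonneg hpartial⟩

theorem sum_range_sub_rpow (N : ℕ) (e : ℝ) :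
    ∑ n ∈ range N, ((N : ℝ) - n) ^ e = ∑ n ∈ range N, ((n : ℝ) + 1) ^ e := by
  rw [← sum_range_reflect]
  refine sum_congr rfl fun n hn => ?_
  rw [Nat.sub_sub, Nat.cast_sub (by simpa [add_comm] using mem_range.1 hn)]
  push_cast
  ring_nf

theorem rpow_neg_mul_inv_le {a δ y d N : ℝ} (ha : 0 ≤ a) (hδ : 0 ≤ δ) (haδ : a + δ ≤ 1)
    (hy : 1 ≤ y) (hd : 1 ≤ d) (hN : 0 < N) (hNyd : N ≤ y + d) :
    y ^ (-(a + δ)) * d⁻¹ ≤ 2 * N ^ (-(a + δ)) * d ^ (-(1 - δ)) + 2 * N⁻¹ * y ^ (-a) := by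
  have hy0 : 0 < y := by linarith
  rcases le_or_gt N (2 * y) with hNy | hNy
  · have hyN : y ^ (-(a + δ)) ≤ 2 * N ^ (-(a + δ)) := by
      rw [rpow_neg hy0.le, rpow_neg hN.le, ← div_eq_mul_inv, le_div_iff₀ (by positivity),
        inv_mul_le_iff₀ (by positivity)]
      calc N ^ (a + δ) ≤ (2 * y) ^ (a + δ) := rpow_le_rpow hN.le hNy (by linarith)
        _ = 2 ^ (a + δ) * y ^ (a + δ) := mul_rpow zero_le_two hy0.le
        _ ≤ y ^ (a + δ) * 2 := by
            rw [mul_comm]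
            gcongr
            exact rpow_le_self_of_one_le one_le_two haδ
    have hd' : d⁻¹ ≤ d ^ (-(1 - δ)) := by
      rw [← rpow_neg_one]
      exact rpow_le_rpow_of_exponent_le hd (by linarith)
    have := mul_le_mul hyN hd' (by positivity) (by positivity)
    nlinarith [show 0 ≤ 2 * N⁻¹ * y ^ (-a) by positivity]
  · have hdN : d⁻¹ ≤ 2 * N⁻¹ := by
      rw [← div_eq_mul_inv, le_div_iff₀ hN, inv_mul_le_iff₀ (by linarith)]
      linarith
    have hy' : y ^ (-(a + δ)) ≤ y ^ (-a) := rpow_le_rpow_of_exponent_le hy (by linarith)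
    have := mul_le_mul hy' hdN (by positivity) (by positivity)
    nlinarith [show 0 ≤ 2 * N ^ (-(a + δ)) * d ^ (-(1 - δ)) by positivity]

theorem sum_range_rpow_neg_mul_inv_sub_le {a δ : ℝ} (ha : 0 ≤ a) (hδ : 0 < δ)
    (haδ : a + δ ≤ 1) {N : ℕ} (hN : 0 < N) :
    ∑ n ∈ range N, ((n : ℝ) + 1) ^ (-(a + δ)) * ((N : ℝ) - n)⁻¹ ≤ 4 / δ * (N : ℝ) ^ (-a) := by
  have hN0 : (0 : ℝ) < N := Nat.cast_pos.2 hN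
  calc ∑ n ∈ range N, ((n : ℝ) + 1) ^ (-(a + δ)) * ((N : ℝ) - n)⁻¹
      ≤ ∑ n ∈ range N, (2 * (N : ℝ) ^ (-(a + δ)) * ((N : ℝ) - n) ^ (-(1 - δ)) +
          2 * (N : ℝ)⁻¹ * ((n : ℝ) + 1) ^ (-a)) := by
        refine sum_le_sum fun n hn => rpow_neg_mul_inv_le ha hδ.le haδ ?_ ?_ hN0 (by linarith)
        · linarith [n.cast_nonneg (α := ℝ)]
        · have : (n : ℝ) + 1 ≤ N := by exact_mod_cast mem_range.1 hn
          linarith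
    _ = 2 * (N : ℝ) ^ (-(a + δ)) * ∑ n ∈ range N, ((n : ℝ) + 1) ^ (-(1 - δ)) +
          2 * (N : ℝ)⁻¹ * ∑ n ∈ range N, ((n : ℝ) + 1) ^ (-a) := by
        rw [sum_add_distrib, ← mul_sum, ← mul_sum, sum_range_sub_rpow]
    _ ≤ 2 * (N : ℝ) ^ (-(a + δ)) * ((N : ℝ) ^ δ / δ) +
          2 * (N : ℝ)⁻¹ * ((N : ℝ) ^ (1 - a) / δ) := by
        gcongr
        · simpa using sum_range_add_one_rpow_neg_le (by linarith) (by linarith : 1 - δ < 1) N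
        · refine (sum_range_add_one_rpow_neg_le ha (by linarith) N).trans ?_
          gcongr
          linarith
    _ = 2 / δ * ((N : ℝ) ^ (-(a + δ)) * (N : ℝ) ^ δ) +
          2 / δ * ((N : ℝ)⁻¹ * (N : ℝ) ^ (1 - a)) := by ring
    _ = 4 / δ * (N : ℝ) ^ (-a) := by
        rw [← rpow_add hN0, ← rpow_neg_one, ← rpow_add hN0]
        ring_nf

noncomputable def nearDiagKernel (b x y : ℝ) : ℝ :=
  min x y ^ (-b) * (1 + |x - y|)⁻¹

namespace nearDiagKernel

variable {b x y : ℝ}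

theorem comm (b x y : ℝ) : nearDiagKernel b x y = nearDiagKernel b y x := by
  rw [nearDiagKernel, nearDiagKernel, min_comm, abs_sub_comm]

theorem nonneg (hx : 0 ≤ x) (hy : 0 ≤ y) : 0 ≤ nearDiagKernel b x y := by
  unfold nearDiagKernel
  have := le_min hx hy
  positivity

theorem of_le (hyx : y ≤ x) : nearDiagKernel b x y = y ^ (-b) * (1 + x - y)⁻¹ := by
  rw [nearDiagKernel, min_eq_right hyx, abs_of_nonneg (sub_nonneg.2 hyx), add_sub_assoc]

theorem mul_rpow_neg_le_of_le {c m : ℝ} (hx : 1 ≤ x) (hxy : x ≤ y) (hm : 0 ≤ m) (hmc : m ≤ c) :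
    nearDiagKernel b x y * y ^ (-c) ≤ x ^ (-(b + c - m)) * (1 + y - x) ^ (-(1 + m)) := by
  have hx0 : 0 < x := by linarith
  have hd : 0 < 1 + y - x := by linarith
  have hsplit : y ^ (-c) ≤ x ^ (-(c - m)) * (1 + y - x) ^ (-m) := by
    rw [show -c = -(c - m) + -m by ring, rpow_add (by linarith)]
    exact mul_le_mul (rpow_le_rpow_of_nonpos hx0 hxy (by linarith))
      (rpow_le_rpow_of_nonpos hd (by linarith) (by linarith)) (rpow_nonneg (by linarith) _)
      (rpow_nonneg (by linarith) _)
  rw [nearDiagKernel, min_eq_left hxy, abs_sub_comm, abs_of_nonneg (by linarith),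
    ← add_sub_assoc]
  calc x ^ (-b) * (1 + y - x)⁻¹ * y ^ (-c)
      ≤ x ^ (-b) * (1 + y - x)⁻¹ * (x ^ (-(c - m)) * (1 + y - x) ^ (-m)) := by gcongr
    _ = (x ^ (-b) * x ^ (-(c - m))) * ((1 + y - x) ^ (-1 : ℝ) * (1 + y - x) ^ (-m)) := by
        rw [rpow_neg_one]; ring
    _ = x ^ (-(b + c - m)) * (1 + y - x) ^ (-(1 + m)) := by
        rw [← rpow_add hx0, ← rpow_add hd]
        ring_nf

theorem summable_and_tsum_nat_succ_mul_rpow_neg_le {a c δ : ℝ} (ha : 0 ≤ a) (hδ : 0 < δ)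
    (haδ : a + δ ≤ 1) (hbc : b + c = a + δ) (hc : δ / 2 ≤ c) {x : ℕ} (hx : 0 < x) :
    Summable (fun n : ℕ => nearDiagKernel b x (n + 1) * ((n : ℝ) + 1) ^ (-c)) ∧
      ∑' n : ℕ, nearDiagKernel b x (n + 1) * ((n : ℝ) + 1) ^ (-c) ≤ 6 / δ * (x : ℝ) ^ (-a) := by
  set F : ℕ → ℝ := fun n => nearDiagKernel b x (n + 1) * ((n : ℝ) + 1) ^ (-c)
  have hx1 : (1 : ℝ) ≤ x := Nat.one_le_cast.2 hx
  have hF0 : ∀ n, 0 ≤ F n := fun n => mul_nonneg (nonneg (by positivity) (by positivity))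
    (by positivity)
  have hhead : ∀ n ∈ range x, F n = ((n : ℝ) + 1) ^ (-(a + δ)) * ((x : ℝ) - n)⁻¹ := by
    intro n hn
    have hnx : (n : ℝ) + 1 ≤ x := by exact_mod_cast mem_range.1 hn
    simp only [F]
    rw [of_le hnx, mul_right_comm, ← rpow_add (by positivity), ← neg_add, hbc]
    ring_nf
  have htail : ∀ n, F (n + x) ≤ (x : ℝ) ^ (-a) * ((n : ℝ) + 2) ^ (-(1 + δ / 2)) := by
    intro n
    have hxy : (x : ℝ) ≤ ((n + x : ℕ) : ℝ) + 1 := by push_cast; linarith [n.cast_nonneg (α := ℝ)]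
    have hd : 1 + (((n + x : ℕ) : ℝ) + 1) - x = n + 2 := by push_cast; ring
    refine (mul_rpow_neg_le_of_le hx1 hxy (by linarith) hc).trans ?_
    rw [hd]
    exact mul_le_mul_of_nonneg_right (rpow_le_rpow_of_exponent_le hx1 (by linarith))
      (by positivity)
  have hT := summable_add_two_rpow_neg_and_tsum_le (a := δ / 2) (by linarith) (by linarith)
  have hFtail : Summable (fun n => F (n + x)) :=
    (hT.1.mul_left _).of_nonneg_of_le (fun n => hF0 _) htail
  have hF : Summable F := (summable_nat_add_iff x).1 hFtail
  refine ⟨hF, ?_⟩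
  rw [← hF.sum_add_tsum_nat_add x, sum_congr rfl hhead]
  calc ∑ n ∈ range x, ((n : ℝ) + 1) ^ (-(a + δ)) * ((x : ℝ) - n)⁻¹ + ∑' n, F (n + x)
      ≤ 4 / δ * (x : ℝ) ^ (-a) + (x : ℝ) ^ (-a) * (1 / (δ / 2)) := by
        gcongr
        · exact sum_range_rpow_neg_mul_inv_sub_le ha hδ haδ hx
        · refine (hFtail.tsum_le_tsum htail (hT.1.mul_left _)).trans ?_
          rw [tsum_mul_left]
          gcongr
          exact hT.2
    _ = 6 / δ * (x : ℝ) ^ (-a) := by field_simp; ring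

theorem summable_and_tsum_mul_rpow_neg_le {a c δ : ℝ} (ha : 0 ≤ a) (hδ : 0 < δ)
    (haδ : a + δ ≤ 1) (hbc : b + c = a + δ) (hc : δ / 2 ≤ c) (x : ℕ+) :
    Summable (fun y : ℕ+ => nearDiagKernel b x y * (y : ℝ) ^ (-c)) ∧
      ∑' y : ℕ+, nearDiagKernel b x y * (y : ℝ) ^ (-c) ≤ 6 / δ * (x : ℝ) ^ (-a) := by
  obtain ⟨hs, hle⟩ := summable_and_tsum_nat_succ_mul_rpow_neg_le ha hδ haδ hbc hc x.pos
  refine ⟨summable_pnat_iff_summable_succ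
    (f := fun n : ℕ => nearDiagKernel b x n * (n : ℝ) ^ (-c)).2 (by simpa using hs), ?_⟩
  rw [tsum_pnat_eq_tsum_succ (f := fun n : ℕ => nearDiagKernel b x n * (n : ℝ) ^ (-c))]
  simpa using hle

end nearDiagKernel

section CauchySchwarz

variable {ι : Type*} {f g r : ι → ℝ}

theorem summable_of_sq_le_mul (hf : ∀ i, 0 ≤ f i) (hg : ∀ i, 0 ≤ g i) (hr : ∀ i, 0 ≤ r i)
    (hfs : Summable f) (hgs : Summable g) (h : ∀ i, r i ^ 2 ≤ f i * g i) : Summable r := by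
  refine ((hfs.add hgs).div_const 2).of_nonneg_of_le hr fun i => ?_
  nlinarith [sq_nonneg (f i - g i), h i, hf i, hg i, hr i]

theorem tsum_sq_le_tsum_mul_tsum_of_sq_le_mul (hf : ∀ i, 0 ≤ f i) (hg : ∀ i, 0 ≤ g i)
    (hfs : Summable f) (hgs : Summable g) (hrs : Summable r) (h : ∀ i, r i ^ 2 ≤ f i * g i) :
    (∑' i, r i) ^ 2 ≤ (∑' i, f i) * ∑' i, g i :=
  le_of_tendsto' (hrs.hasSum.pow 2) fun s =>
    (sum_sq_le_sum_mul_sum_of_sq_le_mul s (fun i _ => hf i) (fun i _ => hg i) fun i _ => h i).trans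
      (mul_le_mul (hfs.sum_le_tsum s fun i _ => hf i) (hgs.sum_le_tsum s fun i _ => hg i)
        (sum_nonneg fun i _ => hg i) (tsum_nonneg hf))

theorem summable_mul_and_sq_tsum_mul_le {k q u : ι → ℝ} (hk : ∀ i, 0 ≤ k i) (hq : ∀ i, 0 < q i)
    (hu : ∀ i, 0 ≤ u i) (hkq : Summable fun i => k i * q i)
    (hkg : Summable fun i => k i * (u i ^ 2 / q i)) :
    Summable (fun i => k i * u i) ∧
      (∑' i, k i * u i) ^ 2 ≤ (∑' i, k i * q i) * ∑' i, k i * (u i ^ 2 / q i) := by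
  have hsq : ∀ i, (k i * u i) ^ 2 ≤ k i * q i * (k i * (u i ^ 2 / q i)) := fun i =>
    le_of_eq (by field_simp [(hq i).ne'])
  have hkq0 : ∀ i, 0 ≤ k i * q i := fun i => mul_nonneg (hk i) (hq i).le
  have hkg0 : ∀ i, 0 ≤ k i * (u i ^ 2 / q i) := fun i =>
    mul_nonneg (hk i) (div_nonneg (sq_nonneg _) (hq i).le)
  have hr := summable_of_sq_le_mul hkq0 hkg0 (fun i => mul_nonneg (hk i) (hu i)) hkq hkg hsq
  exact ⟨hr, tsum_sq_le_tsum_mul_tsum_of_sq_le_mul hkq0 hkg0 hkq hkg hr hsq⟩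

end CauchySchwarz

section Schur

variable {ι κ : Type*} {K : ι → κ → ℝ} {p : ι → ℝ} {q : κ → ℝ} {C₁ C₂ : ℝ} {u : κ → ℝ}

theorem summable_and_tsum_tsum_le_of_col_bound (hK : ∀ i j, 0 ≤ K i j) (hp : ∀ i, 0 < p i)
    (hq : ∀ j, 0 < q j)
    (hcol : ∀ j, Summable (fun i => K i j * p i) ∧ ∑' i, K i j * p i ≤ C₂ * q j)
    (hu2 : Summable fun j => u j ^ 2) :
    Summable (fun x : κ × ι => u x.1 ^ 2 / q x.1 * (K x.2 x.1 * p x.2)) ∧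
      ∑' j, ∑' i, u j ^ 2 / q j * (K i j * p i) ≤ C₂ * ∑' j, u j ^ 2 := by
  have hF0 : 0 ≤ fun x : κ × ι => u x.1 ^ 2 / q x.1 * (K x.2 x.1 * p x.2) := fun x =>
    mul_nonneg (div_nonneg (sq_nonneg _) (hq _).le) (mul_nonneg (hK _ _) (hp _).le)
  have hcolF : ∀ j, ∑' i, u j ^ 2 / q j * (K i j * p i) ≤ C₂ * u j ^ 2 := fun j => by
    rw [tsum_mul_left]
    calc u j ^ 2 / q j * ∑' i, K i j * p i ≤ u j ^ 2 / q j * (C₂ * q j) :=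
          mul_le_mul_of_nonneg_left (hcol j).2 (div_nonneg (sq_nonneg _) (hq j).le)
      _ = C₂ * u j ^ 2 := by field_simp [(hq j).ne']
  have hsum : Summable fun j => ∑' i, u j ^ 2 / q j * (K i j * p i) :=
    (hu2.mul_left C₂).of_nonneg_of_le (fun j => tsum_nonneg fun i => hF0 (j, i)) hcolF
  refine ⟨(summable_prod_of_nonneg hF0).2 ⟨fun j => (hcol j).1.mul_left (u j ^ 2 / q j), hsum⟩, ?_⟩
  rw [← tsum_mul_left]
  exact hsum.tsum_le_tsum hcolF (hu2.mul_left C₂)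

theorem schur_test (hK : ∀ i j, 0 ≤ K i j) (hp : ∀ i, 0 < p i) (hq : ∀ j, 0 < q j)
    (hC₁ : 0 ≤ C₁)
    (hrow : ∀ i, Summable (fun j => K i j * q j) ∧ ∑' j, K i j * q j ≤ C₁ * p i)
    (hcol : ∀ j, Summable (fun i => K i j * p i) ∧ ∑' i, K i j * p i ≤ C₂ * q j)
    (hu : ∀ j, 0 ≤ u j) (hu2 : Summable fun j => u j ^ 2) :
    (∀ i, Summable fun j => K i j * u j) ∧ Summable (fun i => (∑' j, K i j * u j) ^ 2) ∧
      ∑' i, (∑' j, K i j * u j) ^ 2 ≤ C₁ * C₂ * ∑' j, u j ^ 2 := by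
  obtain ⟨hF, hFle⟩ := summable_and_tsum_tsum_le_of_col_bound hK hp hq hcol hu2
  have hF0 : ∀ j i, 0 ≤ u j ^ 2 / q j * (K i j * p i) := fun j i =>
    mul_nonneg (div_nonneg (sq_nonneg _) (hq _).le) (mul_nonneg (hK _ _) (hp _).le)
  obtain ⟨hFrow, hFsum⟩ := (summable_prod_of_nonneg
    (f := fun x : ι × κ => u x.2 ^ 2 / q x.2 * (K x.1 x.2 * p x.1)) fun x => hF0 x.2 x.1).1
    hF.prod_symm
  have hrowF : ∀ i j, u j ^ 2 / q j * (K i j * p i) = p i * (K i j * (u j ^ 2 / q j)) :=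
    fun i j => by ring
  have hg : ∀ i, Summable fun j => K i j * (u j ^ 2 / q j) := fun i =>
    (summable_mul_left_iff (hp i).ne').1 (by simpa only [hrowF] using hFrow i)
  -- Cauchy–Schwarz in row `i` with `K u = √(K q) · √(K u² / q)`, then Tonelli for `hF`.
  have hCS := fun i => summable_mul_and_sq_tsum_mul_le (hK i) hq hu (hrow i).1 (hg i)
  have hrowle : ∀ i, (∑' j, K i j * u j) ^ 2 ≤ C₁ * ∑' j, u j ^ 2 / q j * (K i j * p i) := by
    intro i
    calc (∑' j, K i j * u j) ^ 2 ≤ (∑' j, K i j * q j) * ∑' j, K i j * (u j ^ 2 / q j) :=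
          (hCS i).2
      _ ≤ C₁ * p i * ∑' j, K i j * (u j ^ 2 / q j) :=
          mul_le_mul_of_nonneg_right (hrow i).2
            (tsum_nonneg fun j => mul_nonneg (hK i j) (div_nonneg (sq_nonneg _) (hq j).le))
      _ = C₁ * ∑' j, u j ^ 2 / q j * (K i j * p i) := by
          simp only [hrowF, tsum_mul_left]; ring
  have hsq_sum : Summable fun i => (∑' j, K i j * u j) ^ 2 :=
    (hFsum.mul_left C₁).of_nonneg_of_le (fun i => sq_nonneg _) hrowle
  refine ⟨fun i => (hCS i).1, hsq_sum, ?_⟩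
  calc ∑' i, (∑' j, K i j * u j) ^ 2 ≤ C₁ * ∑' i, ∑' j, u j ^ 2 / q j * (K i j * p i) := by
        rw [← tsum_mul_left]
        exact hsq_sum.tsum_le_tsum hrowle (hFsum.mul_left C₁)
    _ = C₁ * ∑' j, ∑' i, u j ^ 2 / q j * (K i j * p i) := by
        rw [Summable.tsum_comm' (f := fun i j => u j ^ 2 / q j * (K i j * p i)) hF.prod_symm hFrow
          fun j => (hcol j).1.mul_left (u j ^ 2 / q j)]
    _ ≤ C₁ * (C₂ * ∑' j, u j ^ 2) := mul_le_mul_of_nonneg_left hFle hC₁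
    _ = C₁ * C₂ * ∑' j, u j ^ 2 := by ring

end Schur

theorem w_pos (i j : ℕ+) : 0 < w i j := by
  have hm : 0 < min (i : ℝ) j := lt_min (by positivity) (by positivity)
  unfold w
  positivity

theorem le_mul_w (i j : ℕ+) : (i : ℝ) ≤ j * w i j := by
  have hi : (1 : ℝ) ≤ i := Nat.one_le_cast.2 i.pos
  have hj : (1 : ℝ) ≤ j := Nat.one_le_cast.2 j.pos
  have hsm : 1 ≤ √(min (i : ℝ) j) := one_le_sqrt.2 (le_min hi hj)
  rw [w, mul_div_assoc', le_div_iff₀ (by linarith)]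
  rcases le_total (i : ℝ) j with h | h
  · nlinarith [abs_nonneg ((i : ℝ) - j)]
  · rw [min_eq_right h, abs_of_nonneg (sub_nonneg.2 h)]
    have : √(j : ℝ) ≤ j := by rw [sqrt_le_left] <;> nlinarith
    nlinarith

theorem bEnt_nonneg (s β β' : ℝ) (i j : ℕ+) : 0 ≤ bEnt s β β' i j := by
  have := w_pos i j
  unfold bEnt
  positivity

theorem bEnt_le {s : ℝ} (hs : 0 ≤ s) (β β' : ℝ) (i j : ℕ+) :
    bEnt s β β' i j ≤ (i : ℝ) ^ β' * nearDiagKernel β i j := by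
  have hi : (0 : ℝ) < i := by positivity
  have hw := w_pos i j
  have hratio : (i : ℝ) ^ s * ((j : ℝ) ^ (-s) * w i j ^ (-s)) ≤ 1 := by
    rw [← mul_rpow (by positivity) hw.le, rpow_neg (by positivity), ← div_eq_mul_inv,
      div_le_one (by positivity)]
    exact rpow_le_rpow hi.le (le_mul_w i j) hs
  have hK : 0 ≤ (i : ℝ) ^ β' * nearDiagKernel β i j := by
    unfold nearDiagKernel
    have : (0 : ℝ) ≤ min (i : ℝ) j := le_min hi.le (by positivity)
    positivity
  calc bEnt s β β' i j
      = (i : ℝ) ^ β' * nearDiagKernel β i j * ((i : ℝ) ^ s * ((j : ℝ) ^ (-s) * w i j ^ (-s))) := by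
        have hmin : ((min i j : ℕ+) : ℝ) = min (i : ℝ) j := by rw [← Nat.cast_min]; rfl
        rw [bEnt, nearDiagKernel, rpow_add hi, hmin]
        ring
    _ ≤ (i : ℝ) ^ β' * nearDiagKernel β i j := mul_le_of_le_one_right hK hratio

theorem summable_and_tsum_le_of_le {ι : Type*} {f g : ι → ℝ} {C : ℝ} (hf : ∀ i, 0 ≤ f i)
    (hfg : ∀ i, f i ≤ g i) (hg : Summable g ∧ ∑' i, g i ≤ C) : Summable f ∧ ∑' i, f i ≤ C :=
  ⟨hg.1.of_nonneg_of_le hf hfg, ((hg.1.of_nonneg_of_le hf hfg).tsum_le_tsum hfg hg.1).trans hg.2⟩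

theorem bEnt_row_bound {s β β' : ℝ} (hs : 0 ≤ s) (hβ'0 : 0 ≤ β') (hβ'β : β' < β)
    (hβ : β ≤ 1 / 2) (i : ℕ+) :
    Summable (fun j : ℕ+ => bEnt s β β' i j * (j : ℝ) ^ (-((β + β') / 2))) ∧
      ∑' j : ℕ+, bEnt s β β' i j * (j : ℝ) ^ (-((β + β') / 2)) ≤
        6 / (β - β') * (i : ℝ) ^ (-((β + β') / 2)) := by
  obtain ⟨hK, hKle⟩ := nearDiagKernel.summable_and_tsum_mul_rpow_neg_le
    (b := β) (c := (β + β') / 2) (a := β' + (β + β') / 2) (δ := β - β')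
    (by linarith) (by linarith) (by linarith) (by ring) (by linarith) i
  refine summable_and_tsum_le_of_le (fun j => mul_nonneg (bEnt_nonneg s β β' i j) (by positivity))
    (fun j => ?_) ⟨hK.mul_left ((i : ℝ) ^ β'), ?_⟩
  · rw [← mul_assoc]
    exact mul_le_mul_of_nonneg_right (bEnt_le hs β β' i j) (by positivity)
  · rw [tsum_mul_left]
    calc (i : ℝ) ^ β' * ∑' j : ℕ+, nearDiagKernel β i j * (j : ℝ) ^ (-((β + β') / 2))
        ≤ (i : ℝ) ^ β' * (6 / (β - β') * (i : ℝ) ^ (-(β' + (β + β') / 2))) := by gcongr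
      _ = 6 / (β - β') * (i : ℝ) ^ (-((β + β') / 2)) := by
          rw [mul_left_comm, ← rpow_add (by positivity)]
          ring_nf

theorem bEnt_col_bound {s β β' : ℝ} (hs : 0 ≤ s) (hβ'0 : 0 ≤ β') (hβ'β : β' < β)
    (hβ : β ≤ 1 / 2) (j : ℕ+) :
    Summable (fun i : ℕ+ => bEnt s β β' i j * (i : ℝ) ^ (-((β + β') / 2))) ∧
      ∑' i : ℕ+, bEnt s β β' i j * (i : ℝ) ^ (-((β + β') / 2)) ≤
        6 / (β - β') * (j : ℝ) ^ (-((β + β') / 2)) := by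
  obtain hK := nearDiagKernel.summable_and_tsum_mul_rpow_neg_le
    (b := β) (c := (β - β') / 2) (a := (β + β') / 2) (δ := β - β')
    (by linarith) (by linarith) (by linarith) (by ring) le_rfl j
  refine summable_and_tsum_le_of_le (fun i => mul_nonneg (bEnt_nonneg s β β' i j) (by positivity))
    (fun i => ?_) hK
  have hi : (0 : ℝ) < i := by positivity
  calc bEnt s β β' i j * (i : ℝ) ^ (-((β + β') / 2))
      ≤ (i : ℝ) ^ β' * nearDiagKernel β i j * (i : ℝ) ^ (-((β + β') / 2)) :=
        mul_le_mul_of_nonneg_right (bEnt_le hs β β' i j) (by positivity)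
    _ = nearDiagKernel β j i * (i : ℝ) ^ (-((β - β') / 2)) := by
        rw [nearDiagKernel.comm, mul_right_comm, mul_comm, ← rpow_add hi]
        ring_nf

theorem summable_ofReal_mul_and_norm_tsum_le {ι 𝕜 : Type*} [RCLike 𝕜] {f : ι → ℝ}
    (hf : ∀ i, 0 ≤ f i) {z : ι → 𝕜} (hs : Summable fun i => f i * ‖z i‖) :
    Summable (fun i => (f i : 𝕜) * z i) ∧ ‖∑' i, (f i : 𝕜) * z i‖ ≤ ∑' i, f i * ‖z i‖ := by
  have hnorm : ∀ i, ‖(f i : 𝕜) * z i‖ = f i * ‖z i‖ := fun i => by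
    rw [norm_mul, RCLike.norm_ofReal, abs_of_nonneg (hf i)]
  simp only [← hnorm] at hs ⊢
  exact ⟨hs.of_norm, norm_tsum_le_tsum_norm hs⟩

/-- Let `s ≥ 0` and `0 ≤ β' < β ≤ 1/2`.  The matrix with entries
`b_i^j = i^{s+β'} j^{−s} (i∧j)^{−β} (1+|i−j|)^{−1} w(i,j)^{−s}` defines a bounded operator
on `ℓ²(ℕ⁺)` with operator norm at most `2^{s+4}/(β−β')`: for every square-summable complex
sequence `z`, the image sequence `(Bz)_i = ∑_j b_i^j z_j` is well defined, square-summable,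
and `‖Bz‖_{ℓ²} ≤ (2^{s+4}/(β−β'))·‖z‖_{ℓ²}`. -/
theorem bEnt_l2_opNorm_bound (s β β' : ℝ) (hs : 0 ≤ s) (hβ'0 : 0 ≤ β') (hβ'β : β' < β)
    (hβ : β ≤ 1 / 2) :
    ∀ z : ℕ+ → ℂ, Summable (fun j : ℕ+ => ‖z j‖ ^ 2) →
      (∀ i : ℕ+, Summable fun j : ℕ+ => (bEnt s β β' i j : ℂ) * z j) ∧
      Summable (fun i : ℕ+ => ‖∑' j : ℕ+, (bEnt s β β' i j : ℂ) * z j‖ ^ 2) ∧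
      Real.sqrt (∑' i : ℕ+, ‖∑' j : ℕ+, (bEnt s β β' i j : ℂ) * z j‖ ^ 2) ≤
        2 ^ (s + 4) / (β - β') * Real.sqrt (∑' j : ℕ+, ‖z j‖ ^ 2) := by
  intro z hz
  have hδ : 0 < β - β' := sub_pos.2 hβ'β
  have hweight : ∀ n : ℕ+, (0 : ℝ) < (n : ℝ) ^ (-((β + β') / 2)) := fun n => by positivity
  obtain ⟨hrow, hsq, hle⟩ := schur_test (bEnt_nonneg s β β') hweight hweight (by positivity)
    (bEnt_row_bound hs hβ'0 hβ'β hβ) (bEnt_col_bound hs hβ'0 hβ'β hβ)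
    (fun j => norm_nonneg (z j)) hz
  have hB := fun i => summable_ofReal_mul_and_norm_tsum_le (bEnt_nonneg s β β' i) (hrow i)
  have hBsq : ∀ i, ‖∑' j, (bEnt s β β' i j : ℂ) * z j‖ ^ 2 ≤ (∑' j, bEnt s β β' i j * ‖z j‖) ^ 2 :=
    fun i => pow_le_pow_left₀ (norm_nonneg _) (hB i).2 2
  have hBsum := hsq.of_nonneg_of_le (fun i => sq_nonneg _) hBsq
  refine ⟨fun i => (hB i).1, hBsum, ?_⟩
  have h16 : (6 : ℝ) ≤ 2 ^ (s + 4) := by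
    calc (6 : ℝ) ≤ 2 ^ (4 : ℝ) := by norm_num
      _ ≤ 2 ^ (s + 4) := rpow_le_rpow_of_exponent_le one_le_two (by linarith)
  calc Real.sqrt (∑' i, ‖∑' j, (bEnt s β β' i j : ℂ) * z j‖ ^ 2)
      ≤ Real.sqrt ((6 / (β - β')) ^ 2 * ∑' j, ‖z j‖ ^ 2) := by
        gcongr
        exact (hBsum.tsum_le_tsum hBsq hsq).trans (by simpa only [sq] using hle)
    _ = 6 / (β - β') * Real.sqrt (∑' j, ‖z j‖ ^ 2) := by
        rw [Real.sqrt_mul (sq_nonneg _), Real.sqrt_sq (by positivity)]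
    _ ≤ 2 ^ (s + 4) / (β - β') * Real.sqrt (∑' j, ‖z j‖ ^ 2) := by gcongr
end
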